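/- Fix an integer p ≥ 1 and let Λ := {(2πi)^p k : k ∈ ℤ} ⊆ ℂ and P⁰ := {f ∈ ℂ[x] : f(0) ∈ Λ and f(1) = 0}. Then: (i) the only f ∈ P⁰ with f′ = 0 is f = 0; (ii) the additive map ℂ[x] → ℂ/Λ sending q to the class of ∫₀¹ q modulo Λ is surjective, and its kernel is exactly the set of derivatives {f′ : f ∈ P⁰}; consequently it induces an isomorphism of abelian groups ℂ[x]/{f′ : f ∈ P⁰} ≅ ℂ/Λ. (This computes the weight-p Deligne–Beilinson cohomology of a point via the path complex: H⁰ = 0 and H¹ ≅ ℂ/ℤ(p).) -/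

import Mathlib

open Polynomial

/-- The lattice `ℤ(p) = (2πi)^p ℤ ⊆ ℂ`. -/
noncomputable def tateLattice (p : ℕ) : AddSubgroup ℂ :=
  AddSubgroup.zmultiples ((2 * Real.pi * Complex.I) ^ p)

/-- `∫₀¹ q := ∑ i, aᵢ/(i+1)` for a polynomial `q = ∑ i, aᵢ xⁱ ∈ ℂ[x]`. -/
noncomputable def polyInt01 (q : Polynomial ℂ) : ℂ :=
  q.sum fun i a => a / ((i : ℂ) + 1)

/-- The degree-0 part `P⁰ = {f ∈ ℂ[x] : f(0) ∈ ℤ(p), f(1) = 0}` of the Deligne path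
complex of a point, as an additive subgroup of `ℂ[x]`. -/
noncomputable def pathP0 (p : ℕ) : AddSubgroup (Polynomial ℂ) :=
  ((tateLattice p).comap (Polynomial.evalRingHom (0 : ℂ)).toAddMonoidHom) ⊓
    ((⊥ : AddSubgroup ℂ).comap (Polynomial.evalRingHom (1 : ℂ)).toAddMonoidHom)

/-- The additive subgroup `{f' : f ∈ P⁰} ⊆ ℂ[x]` of derivatives of elements of `P⁰`. -/
noncomputable def derivPathP0 (p : ℕ) : AddSubgroup (Polynomial ℂ) :=
  AddSubgroup.map (Polynomial.derivative (R := ℂ)).toAddMonoidHom (pathP0 p)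

/-! The antiderivative `F` of `q` with `F(0) = 0` satisfies `∫₀¹ q = F(1)`. Two polynomials with
the same derivative that agree at one point are equal, so `∫₀¹ f' = f(1) - f(0)`; hence
`∫₀¹ q ∈ Λ` exactly when `q = f'` for `f = F - ∫₀¹ q`, which lies in `P⁰`. Constants show that
`∫₀¹` is onto `ℂ`, and the first isomorphism theorem gives `ℂ[x]/{f' : f ∈ P⁰} ≅ ℂ/Λ`. -/

theorem Polynomial.eq_of_derivative_eq_of_eval_eq {R : Type*} [Ring R] [IsAddTorsionFree R]
    {f g : R[X]} {a : R} (hd : derivative f = derivative g) (ha : f.eval a = g.eval a) :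
    f = g := by
  have hconst := eq_C_of_derivative_eq_zero (p := f - g) (by rw [map_sub, hd, sub_self])
  have hzero : (f - g).coeff 0 = 0 := by
    simpa [ha] using (congrArg (eval a) hconst).symm
  rwa [hzero, C_0, sub_eq_zero] at hconst

section Antiderivative

variable {K : Type*} [Field K]

noncomputable def Polynomial.antideriv (q : K[X]) : K[X] :=
  q.sum fun i a => monomial (i + 1) (a / ((i : K) + 1))

theorem Polynomial.derivative_antideriv [CharZero K] (q : K[X]) : derivative (antideriv q) = q := by
  conv_rhs => rw [← sum_monomial_eq q]
  rw [antideriv, Polynomial.sum, Polynomial.sum, map_sum]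
  refine Finset.sum_congr rfl fun i _ => ?_
  rw [derivative_monomial, Nat.add_sub_cancel, Nat.cast_add_one,
    div_mul_cancel₀ _ (Nat.cast_add_one_ne_zero i)]

theorem Polynomial.antideriv_eval_zero (q : K[X]) : (antideriv q).eval 0 = 0 := by
  simp [antideriv, Polynomial.sum, eval_finsetSum]

end Antiderivative

theorem polyInt01_eq_eval_one_antideriv (q : ℂ[X]) : polyInt01 q = (antideriv q).eval 1 := by
  simp [polyInt01, antideriv, Polynomial.sum, eval_finsetSum]

theorem polyInt01_derivative (f : ℂ[X]) : polyInt01 (derivative f) = f.eval 1 - f.eval 0 := by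
  have hF : antideriv (derivative f) = f - C (f.eval 0) :=
    eq_of_derivative_eq_of_eval_eq (a := 0) (by rw [derivative_antideriv, map_sub,
      derivative_C, sub_zero]) (by rw [antideriv_eval_zero, eval_sub, eval_C, sub_self])
  rw [polyInt01_eq_eval_one_antideriv, hF, eval_sub, eval_C]

theorem polyInt01_C (c : ℂ) : polyInt01 (C c) = c := by
  simp [polyInt01, sum_C_index]

theorem polyInt01_surjective : Function.Surjective polyInt01 :=
  fun c => ⟨C c, polyInt01_C c⟩

noncomputable def polyInt01Hom : ℂ[X] →+ ℂ where
  toFun := polyInt01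
  map_zero' := by simp [polyInt01]
  map_add' q r := by
    simp only [polyInt01]
    rw [sum_add_index] <;> intros <;> simp [add_div]

theorem polyInt01_mem_iff (Λ : AddSubgroup ℂ) (q : ℂ[X]) :
    polyInt01 q ∈ Λ ↔ ∃ f : ℂ[X], f.eval 0 ∈ Λ ∧ f.eval 1 = 0 ∧ derivative f = q := by
  constructor
  · intro hq
    refine ⟨antideriv q - C (polyInt01 q), ?_, ?_, ?_⟩
    · simpa [antideriv_eval_zero] using Λ.neg_mem hq
    · simp [polyInt01_eq_eval_one_antideriv]
    · rw [map_sub, derivative_C, sub_zero, derivative_antideriv]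
  · rintro ⟨f, h0, h1, rfl⟩
    rw [polyInt01_derivative, h1, zero_sub]
    exact Λ.neg_mem h0

theorem mem_derivPathP0_iff (p : ℕ) (q : ℂ[X]) :
    q ∈ derivPathP0 p ↔
      ∃ f : ℂ[X], f.eval 0 ∈ tateLattice p ∧ f.eval 1 = 0 ∧ derivative f = q := by
  simp [derivPathP0, pathP0, and_assoc]

theorem ker_mk_comp_polyInt01Hom (p : ℕ) :
    ((QuotientAddGroup.mk' (tateLattice p)).comp polyInt01Hom).ker = derivPathP0 p := by
  ext q
  rw [AddMonoidHom.mem_ker, mem_derivPathP0_iff, ← polyInt01_mem_iff]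
  exact QuotientAddGroup.eq_zero_iff _

theorem deligne_cohomology_of_point_general (p : ℕ) :
    -- (i) `H⁰ = 0`
    (∀ f : Polynomial ℂ,
      f.eval 0 ∈ tateLattice p → f.eval 1 = 0 → Polynomial.derivative f = 0 → f = 0) ∧
    -- (ii) surjectivity
    Function.Surjective
      (fun q : Polynomial ℂ => (QuotientAddGroup.mk (polyInt01 q) : ℂ ⧸ tateLattice p)) ∧
    -- (ii) kernel = derivatives of elements of `P⁰`
    (∀ q : Polynomial ℂ,
      (QuotientAddGroup.mk (polyInt01 q) : ℂ ⧸ tateLattice p) = 0 ↔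
        ∃ f : Polynomial ℂ, f.eval 0 ∈ tateLattice p ∧ f.eval 1 = 0 ∧
          Polynomial.derivative f = q) ∧
    -- consequence: `H¹ ≅ ℂ/ℤ(p)`
    Nonempty ((Polynomial ℂ ⧸ derivPathP0 p) ≃+ (ℂ ⧸ tateLattice p)) := by
  have hsurj : Function.Surjective
      (fun q : ℂ[X] => (QuotientAddGroup.mk (polyInt01 q) : ℂ ⧸ tateLattice p)) :=
    QuotientAddGroup.mk_surjective.comp polyInt01_surjective
  refine ⟨fun f _ h1 hd => ?_, hsurj,
    fun q => (QuotientAddGroup.eq_zero_iff _).trans (polyInt01_mem_iff _ q), ?_⟩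
  · exact eq_of_derivative_eq_of_eval_eq (g := 0) (a := 1) (by rw [hd, map_zero])
      (by rw [h1, eval_zero])
  · exact ⟨(QuotientAddGroup.quotientAddEquivOfEq (ker_mk_comp_polyInt01Hom p).symm).trans
      (QuotientAddGroup.quotientKerEquivOfSurjective _ hsurj)⟩

/-- Fix an integer `p ≥ 1`, `Λ := (2πi)^p ℤ` and
`P⁰ := {f ∈ ℂ[x] : f(0) ∈ Λ, f(1) = 0}`.  Then (i) the only `f ∈ P⁰` with `f' = 0` is
`f = 0`; (ii) the additive map `ℂ[x] → ℂ/Λ`, `q ↦ ∫₀¹ q mod Λ`, is surjective and its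
kernel is exactly `{f' : f ∈ P⁰}`; consequently it induces an isomorphism of abelian
groups `ℂ[x]/{f' : f ∈ P⁰} ≃ ℂ/Λ`.  (This computes the weight-`p` Deligne–Beilinson
cohomology of a point: `H⁰ = 0` and `H¹ ≅ ℂ/ℤ(p)`.) -/
theorem deligne_cohomology_of_point (p : ℕ) (hp : 1 ≤ p) :
    -- (i) `H⁰ = 0`
    (∀ f : Polynomial ℂ,
      f.eval 0 ∈ tateLattice p → f.eval 1 = 0 → Polynomial.derivative f = 0 → f = 0) ∧
    -- (ii) surjectivity
    Function.Surjective
      (fun q : Polynomial ℂ => (QuotientAddGroup.mk (polyInt01 q) : ℂ ⧸ tateLattice p)) ∧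
    -- (ii) kernel = derivatives of elements of `P⁰`
    (∀ q : Polynomial ℂ,
      (QuotientAddGroup.mk (polyInt01 q) : ℂ ⧸ tateLattice p) = 0 ↔
        ∃ f : Polynomial ℂ, f.eval 0 ∈ tateLattice p ∧ f.eval 1 = 0 ∧
          Polynomial.derivative f = q) ∧
    -- consequence: `H¹ ≅ ℂ/ℤ(p)`
    Nonempty ((Polynomial ℂ ⧸ derivPathP0 p) ≃+ (ℂ ⧸ tateLattice p)) :=
  deligne_cohomology_of_point_general p
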